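/- arXiv:0905.3121 — 3 statements merged into one kernel-verified Lean document; each statement's English description precedes it below -/
import Mathlib

section
/- In F₂[x, y, z], the kernel of the derivation d = x² ∂/∂x + y² ∂/∂y + z² ∂/∂z, intersected with the span of even-degree elements that are killed also by the derivation d₁ = x⁴ ∂/∂x + y⁴ ∂/∂y + z⁴ ∂/∂z, equals F₂[x², y², z²] in even degrees. Precisely: every even-degree polynomial f ∈ F₂[x,y,z] with d(f) = 0 and d₁(f) = 0 lies in F₂[x², y², z²]. -/
/-!
Grade `F₂[x, y, z]` by the parities of the exponents, with values in `(ℤ/2)³`. The operator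
`x_i^(2n) ∂_i` shifts this grading by `e_i` and kills the part that is even in `x_i`. An
even-degree `f` splits as `f₀ + f_xy + f_xz + f_yz`, and the `e_x`-component of `d f = 0` reads
`y² ∂_y f_xy + z² ∂_z f_xz = 0`, that of `d₁ f = 0` the same with fourth powers. As `y² ≠ z²`,
this Vandermonde system forces `∂_y f_xy = ∂_z f_xz = 0`, and `∂_y` is injective on polynomials
odd in `y` (there `y ∂_y` is the identity). Likewise `f_yz = 0`, so `f = f₀` has even exponents.
-/

open MvPolynomial Finsupp

theorem eq_zero_of_mul_add_mul_eq_zero {A : Type*} [CommRing A] [NoZeroDivisors A] {a b p q : A}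
    (hb : b ≠ 0) (hab : a ≠ b) (h₁ : a * p + b * q = 0) (h₂ : a ^ 2 * p + b ^ 2 * q = 0) :
    q = 0 := by
  have h : b * (a - b) * q = 0 := by linear_combination a * h₁ - h₂
  exact (mul_eq_zero.mp h).resolve_left (mul_ne_zero hb (sub_ne_zero.mpr hab))

namespace MvPolynomial

section Derivation

variable {R σ A : Type*} [CommSemiring R] [Fintype σ] [AddCommMonoid A] [Module R A]
  [Module (MvPolynomial σ R) A] [IsScalarTower R (MvPolynomial σ R) A]

theorem derivation_apply_eq_sum_pderiv_smul (D : Derivation R (MvPolynomial σ R) A)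
    (f : MvPolynomial σ R) : D f = ∑ i, pderiv i f • D (X i) := by
  classical
  let D' := ∑ i, (LinearMap.toSpanSingleton (MvPolynomial σ R) A (D (X i))).compDer (pderiv i)
  have hD' : ∀ g, D' g = ∑ i, pderiv i g • D (X i) := fun g => by
    simp only [D', ← Derivation.coeFnAddMonoidHom_apply, map_sum, Finset.sum_apply]
    rfl
  rw [← hD', show D' = D from derivation_ext fun j => by simp [hD', Pi.single_apply]]

end Derivation

section Weighted

variable {R σ M : Type*} [CommSemiring R] [AddCancelCommMonoid M] {w : σ → M}

theorem weightedHomogeneousComponent_monomial_mul (s : σ →₀ ℕ) (a : R) (ψ : M)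
    (g : MvPolynomial σ R) :
    weightedHomogeneousComponent w (weight w s + ψ) (monomial s a * g) =
      monomial s a * weightedHomogeneousComponent w ψ g := by
  classical
  ext m
  simp only [coeff_weightedHomogeneousComponent, coeff_monomial_mul']
  by_cases hs : s ≤ m
  · obtain ⟨t, rfl⟩ := exists_add_of_le hs
    simp [hs, add_tsub_cancel_left]
  · simp [hs]

theorem weightedHomogeneousComponent_pderiv (i : σ) (ψ : M) (f : MvPolynomial σ R) :
    weightedHomogeneousComponent w ψ (pderiv i f) =
      pderiv i (weightedHomogeneousComponent w (ψ + w i) f) := by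
  classical
  ext m
  simp only [coeff_weightedHomogeneousComponent, coeff_pderiv, map_add, weight_single, one_smul,
    add_left_inj]
  split_ifs <;> simp

end Weighted

section Parity

variable {R σ : Type*} [DecidableEq σ]

/-- Weighted homogeneous components for these weights form the grading of `MvPolynomial σ R`
by exponent parities, with values in `σ → ZMod 2`. -/
def parityWeight (σ : Type*) [DecidableEq σ] : σ → σ → ZMod 2 := fun i => Pi.single i 1

theorem weight_parityWeight (m : σ →₀ ℕ) :
    weight (parityWeight σ) m = fun j => (m j : ZMod 2) := by
  funext j
  simp only [weight_apply, Finsupp.sum, Finset.sum_apply, Pi.smul_apply, parityWeight,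
    Pi.single_apply, smul_ite, nsmul_one, smul_zero, Finset.sum_ite_eq]
  split_ifs with h
  · rfl
  · rw [Finsupp.notMem_support_iff.mp h, Nat.cast_zero]

theorem nsmul_parityWeight_of_even {n : ℕ} (hn : Even n) (i : σ) : n • parityWeight σ i = 0 := by
  obtain ⟨k, rfl⟩ := hn
  rw [← two_mul, mul_nsmul, two_nsmul, ZModModule.add_self, nsmul_zero]

theorem weightedHomogeneousComponent_X_pow_mul_pderiv [CommSemiring R] {n : ℕ} (hn : Even n)
    (ψ : σ → ZMod 2) (i : σ) (f : MvPolynomial σ R) :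
    weightedHomogeneousComponent (parityWeight σ) ψ (X i ^ n * pderiv i f) =
      X i ^ n *
        pderiv i (weightedHomogeneousComponent (parityWeight σ) (ψ + parityWeight σ i) f) := by
  have h := weightedHomogeneousComponent_monomial_mul (w := parityWeight σ) (single i n) (1 : R) ψ
    (pderiv i f)
  rwa [weight_single, nsmul_parityWeight_of_even hn, zero_add, ← X_pow_eq_monomial,
    weightedHomogeneousComponent_pderiv] at h

theorem IsWeightedHomogeneous.mem_adjoin_range_X_sq [CommSemiring R] {g : MvPolynomial σ R}
    (hg : g.IsWeightedHomogeneous (parityWeight σ) 0) :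
    g ∈ Algebra.adjoin R (Set.range fun i => (X i ^ 2 : MvPolynomial σ R)) := by
  rw [g.as_sum]
  refine Subalgebra.sum_mem _ fun m hm => ?_
  rw [monomial_eq]
  refine mul_mem (Subalgebra.algebraMap_mem _ _) (Subalgebra.prod_mem _ fun i _ => ?_)
  have hmi : Even (m i) := by
    have := congrFun (hg (mem_support_iff.mp hm)) i
    rwa [weight_parityWeight, Pi.zero_apply, ZMod.natCast_eq_zero_iff_even] at this
  obtain ⟨k, hk⟩ := hmi
  show X i ^ m i ∈ _
  rw [hk, ← two_mul, pow_mul]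
  exact pow_mem (Algebra.subset_adjoin (Set.mem_range_self i)) k

variable [CommSemiring R] [CharP R 2] {g : MvPolynomial σ R} {φ : σ → ZMod 2}

theorem natCast_apply_of_weight_parityWeight {m : σ →₀ ℕ} (hm : weight (parityWeight σ) m = φ)
    (i : σ) : (m i : R) = (φ i).val := by
  rw [← hm, weight_parityWeight, ZMod.val_natCast, CharP.natCast_eq_natCast_mod R 2]

theorem IsWeightedHomogeneous.pderiv_eq_zero_of_parity
    (hg : g.IsWeightedHomogeneous (parityWeight σ) φ) {i : σ} (hi : φ i = 0) : pderiv i g = 0 := by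
  rw [g.as_sum, map_sum]
  refine Finset.sum_eq_zero fun m hm => ?_
  rw [pderiv_monomial, natCast_apply_of_weight_parityWeight (hg (mem_support_iff.mp hm)), hi,
    ZMod.val_zero, Nat.cast_zero, mul_zero, monomial_zero]

theorem IsWeightedHomogeneous.X_mul_pderiv_of_parity
    (hg : g.IsWeightedHomogeneous (parityWeight σ) φ) {i : σ} (hi : φ i = 1) :
    X i * pderiv i g = g := by
  conv_lhs => rw [g.as_sum, map_sum, Finset.mul_sum]
  conv_rhs => rw [g.as_sum]
  refine Finset.sum_congr rfl fun m hm => ?_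
  rw [X_mul_pderiv_monomial, nsmul_eq_mul,
    natCast_apply_of_weight_parityWeight (hg (mem_support_iff.mp hm)), hi, ZMod.val_one,
    Nat.cast_one, one_mul]

end Parity

theorem X_pow_injective {R σ : Type*} [CommSemiring R] [Nontrivial R] {n : ℕ} (hn : n ≠ 0) :
    Function.Injective fun i : σ => (X i ^ n : MvPolynomial σ R) := fun i j h => by
  simpa [X_pow_eq_monomial, monomial_left_inj one_ne_zero, single_left_inj hn] using h

section ThreeVariables

variable {R : Type*}

theorem weightedHomogeneousComponent_parityWeight_add_eq_zero [CommRing R] [IsDomain R] [CharP R 2]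
    {f : MvPolynomial (Fin 3) R}
    (h₂ : ∑ i, X i ^ 2 * pderiv i f = 0) (h₄ : ∑ i, X i ^ 4 * pderiv i f = 0)
    {j k : Fin 3} (hjk : j ≠ k) :
    weightedHomogeneousComponent (parityWeight (Fin 3)) (parityWeight _ k + parityWeight _ j) f =
      0 := by
  obtain ⟨l, hlj, hl⟩ : ∃ l, l ≠ j ∧ ∀ x, x ≠ j → x ≠ l → x = k := by
    revert j k; decide
  -- the component of `∑ i, X i ^ n * pderiv i f` of parity `Pi.single k 1` is `∑ i, X i ^ n * P i`
  let P : Fin 3 → MvPolynomial (Fin 3) R := fun i =>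
    pderiv i (weightedHomogeneousComponent (parityWeight _) (parityWeight _ k + parityWeight _ i) f)
  have hPk : P k = 0 := by
    refine IsWeightedHomogeneous.pderiv_eq_zero_of_parity (φ := 0) ?_ rfl
    rw [← ZModModule.add_self (parityWeight _ k)]
    exact weightedHomogeneousComponent_isWeightedHomogeneous _ _
  have two_terms : ∀ n, Even n → ∑ i, X i ^ n * pderiv i f = 0 →
      X l ^ n * P l + X j ^ n * P j = 0 := fun n hn h => by
    rw [← Fintype.sum_eq_add (f := fun i => X i ^ n * P i) l j hlj
      fun x hx => by rw [hl x hx.2 hx.1, hPk, mul_zero]]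
    simpa only [map_sum, map_zero, weightedHomogeneousComponent_X_pow_mul_pderiv hn] using
      congrArg (weightedHomogeneousComponent (parityWeight _) (parityWeight _ k)) h
  have hPj : P j = 0 :=
    eq_zero_of_mul_add_mul_eq_zero (pow_ne_zero _ (X_ne_zero j))
      ((X_pow_injective two_ne_zero).ne hlj) (two_terms 2 even_two h₂)
      (by simpa only [← pow_mul] using two_terms 4 (by decide) h₄)
  rw [← (weightedHomogeneousComponent_isWeightedHomogeneous _ _).X_mul_pderiv_of_parity (i := j)]
  · exact (congrArg (X j * ·) hPj).trans (mul_zero _)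
  · simp [parityWeight, hjk]

theorem isWeightedHomogeneous_parityWeight_zero_of_even [CommSemiring R]
    {f : MvPolynomial (Fin 3) R}
    (heven : ∀ m ∈ f.support, Even (m.sum fun _ e => e))
    (h : ∀ j k : Fin 3, j ≠ k →
      weightedHomogeneousComponent (parityWeight _) (parityWeight _ k + parityWeight _ j) f = 0) :
    f.IsWeightedHomogeneous (parityWeight (Fin 3)) 0 := by
  have even_weight : ∀ p : Fin 3 → ZMod 2, p ≠ 0 → ∑ i, p i = 0 →
      ∃ j k, j ≠ k ∧ p = parityWeight _ k + parityWeight _ j := by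
    unfold parityWeight; decide
  intro m hm
  by_contra hne
  have hsum : ∑ i, weight (parityWeight (Fin 3)) m i = 0 := by
    have := heven m (mem_support_iff.mpr hm)
    rwa [sum_fintype _ _ fun _ => rfl, ← ZMod.natCast_eq_zero_iff_even, Nat.cast_sum,
      ← weight_parityWeight] at this
  obtain ⟨j, k, hjk, hp⟩ := even_weight _ hne hsum
  have := congrArg (coeff m) (h j k hjk)
  rw [← hp, coeff_weightedHomogeneousComponent, if_pos rfl, coeff_zero] at this
  exact hm this

end ThreeVariables

end MvPolynomial

/-- In `F₂[x, y, z]` (with `x = X 0`, `y = X 1`, `z = X 2`), every polynomial `f` all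
of whose monomials have even total degree which is killed both by the Milnor
derivation `d = Q₀` (determined by `d(x) = x²`, `d(y) = y²`, `d(z) = z²`) and by the
Milnor derivation `d₁ = Q₁` (determined by `d₁(x) = x⁴`, `d₁(y) = y⁴`, `d₁(z) = z⁴`)
lies in the subalgebra `F₂[x², y², z²]`. -/
theorem even_kernel_of_milnor_derivations
    (d d₁ : Derivation (ZMod 2) (MvPolynomial (Fin 3) (ZMod 2))
      (MvPolynomial (Fin 3) (ZMod 2)))
    (hd : ∀ i : Fin 3, d (X i) = X i ^ 2)
    (hd₁ : ∀ i : Fin 3, d₁ (X i) = X i ^ 4)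
    (f : MvPolynomial (Fin 3) (ZMod 2))
    (heven : ∀ m ∈ f.support, Even (m.sum fun _ e => e))
    (h0 : d f = 0) (h1 : d₁ f = 0) :
    f ∈ Algebra.adjoin (ZMod 2)
      ({X 0 ^ 2, X 1 ^ 2, X 2 ^ 2} : Set (MvPolynomial (Fin 3) (ZMod 2))) := by
  have h_sum : ∀ (D : Derivation (ZMod 2) _ _) (n : ℕ), (∀ i, D (X i) = X i ^ n) →
      D f = ∑ i, X i ^ n * pderiv i f := fun D n hD => by
    rw [derivation_apply_eq_sum_pderiv_smul]
    exact Finset.sum_congr rfl fun i _ => by rw [hD, smul_eq_mul, mul_comm]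
  have hf := isWeightedHomogeneous_parityWeight_zero_of_even heven fun j k hjk =>
    weightedHomogeneousComponent_parityWeight_add_eq_zero ((h_sum d 2 hd).symm.trans h0)
      ((h_sum d₁ 4 hd₁).symm.trans h1) hjk
  refine Algebra.adjoin_mono ?_ hf.mem_adjoin_range_X_sq
  rintro _ ⟨i, rfl⟩
  fin_cases i <;> simp
end

section
/- In the graded polynomial ring F₂[u, v] with |u| = |v| = 1, the ideal generated by R = u² + uv + v² is not stable under the total Steenrod operation, and the ideal generated by R and Sq¹R = u²v + uv² is the smallest Steenrod-stable ideal containing R; the quotient F₂[u, v, t]/(R, Sq¹R) with |t| = 4 has Poincaré series (1 + 2s + 2s² + s³)/(1 − s⁴). -/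
set_option synthInstance.maxHeartbeats 1000000
set_option maxHeartbeats 1000000

open MvPolynomial

/-- The total Steenrod operation on `H^*((Z/2)²; F₂) = F₂[u, v]` (with `u = X 0`,
`v = X 1`): the ring homomorphism sending each degree-one generator `x` to `x + x²`. -/
noncomputable def totalSq :
    MvPolynomial (Fin 2) (ZMod 2) →ₐ[ZMod 2] MvPolynomial (Fin 2) (ZMod 2) :=
  aeval fun i => X i + X i ^ 2

/-- The Steenrod operation `Sq^k` on `F₂[u, v]`: on a homogeneous piece of degree `d`
it is the degree `d + k` component of the total Steenrod operation. -/
noncomputable def SqOp (k : ℕ) (f : MvPolynomial (Fin 2) (ZMod 2)) :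
    MvPolynomial (Fin 2) (ZMod 2) :=
  ∑ d ∈ Finset.range (f.totalDegree + 1),
    homogeneousComponent (d + k) (totalSq (homogeneousComponent d f))

/-- The relation `R = u² + uv + v²` of the cohomology of the quaternion group `Q₈`. -/
noncomputable def Rrel : MvPolynomial (Fin 2) (ZMod 2) :=
  X 0 ^ 2 + X 0 * X 1 + X 1 ^ 2

/-!
The total square `Sq = ∑ Sq^k` is the ring map with `x ↦ x + x²` on degree-one classes, and
`Sq R = R + Sq¹R + R²`, `Sq (Sq¹R) = Sq¹R · (1 + u)(1 + v)(1 + u + v)`. Hence the homogeneous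
ideal `(R, Sq¹R)` is `Sq`-stable, so stable under every `Sq^k`. `Sq¹R ∉ (R)` because `R`
vanishes at `(u, v) = (ω, 1)` with `ω² + ω + 1 = 0` while `Sq¹R = uv(u + v)` does not.

Modulo `(R, Sq¹R)` one has `u³ = v³ = u²v² = 0`, `u² = uv + v²` and `u²v = uv²`, so the part of
degree `r + 4q` (`r < 4`) is spanned by `t^q` times `1`; `u, v`; `uv, v²`; `uv²` respectively.
These classes are independent because the socle class `uv²t^q` is nonzero: multiplication by
`u + v` maps `(R, Sq¹R)` into `(u³, v³)`, which has no `u²v²t^q` term, while `(u + v)uv²t^q`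
has one.
-/

theorem two_eq_zero_of_zmod_two (A : Type*) [Ring A] [Algebra (ZMod 2) A] : (2 : A) = 0 := by
  rw [← map_ofNat (algebraMap (ZMod 2) A) 2]
  exact (algebraMap (ZMod 2) A).map_zero

section Relations

variable {A : Type*} [CommRing A] [Algebra (ZMod 2) A] {x y : A}

theorem sq_eq_of_relation (hR : x ^ 2 + x * y + y ^ 2 = 0) : x ^ 2 = x * y + y ^ 2 := by
  linear_combination hR - (x * y + y ^ 2) * two_eq_zero_of_zmod_two A

theorem sq_mul_eq_of_relation (hS : x ^ 2 * y + x * y ^ 2 = 0) : x ^ 2 * y = x * y ^ 2 := by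
  linear_combination hS - x * y ^ 2 * two_eq_zero_of_zmod_two A

theorem cube_left_eq_zero_of_relations (hR : x ^ 2 + x * y + y ^ 2 = 0)
    (hS : x ^ 2 * y + x * y ^ 2 = 0) : x ^ 3 = 0 := by
  linear_combination x * hR + hS - (x ^ 2 * y + x * y ^ 2) * two_eq_zero_of_zmod_two A

theorem cube_right_eq_zero_of_relations (hR : x ^ 2 + x * y + y ^ 2 = 0)
    (hS : x ^ 2 * y + x * y ^ 2 = 0) : y ^ 3 = 0 :=
  cube_left_eq_zero_of_relations (x := y) (y := x) (by linear_combination hR)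
    (by linear_combination hS)

theorem sq_mul_sq_eq_zero_of_relations (hR : x ^ 2 + x * y + y ^ 2 = 0)
    (hS : x ^ 2 * y + x * y ^ 2 = 0) : x ^ 2 * y ^ 2 = 0 := by
  linear_combination (x + y) * hS + x * y * hR -
    (x ^ 3 * y + x ^ 2 * y ^ 2 + x * y ^ 3) * two_eq_zero_of_zmod_two A

theorem pow_mul_pow_eq_zero_of_relations (hR : x ^ 2 + x * y + y ^ 2 = 0)
    (hS : x ^ 2 * y + x * y ^ 2 = 0) {a b : ℕ} (hab : 4 ≤ a + b) : x ^ a * y ^ b = 0 := by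
  rcases le_or_gt 3 a with ha | ha
  · rw [← Nat.sub_add_cancel ha, pow_add, cube_left_eq_zero_of_relations hR hS, mul_zero,
      zero_mul]
  rcases le_or_gt 3 b with hb | hb
  · rw [← Nat.sub_add_cancel hb, pow_add, cube_right_eq_zero_of_relations hR hS, mul_zero,
      mul_zero]
  obtain ⟨rfl, rfl⟩ : a = 2 ∧ b = 2 := by omega
  exact sq_mul_sq_eq_zero_of_relations hR hS

end Relations

section IdealQ8

variable {σ : Type*}

noncomputable def relQ8 (i j : σ) : MvPolynomial σ (ZMod 2) := X i ^ 2 + X i * X j + X j ^ 2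

noncomputable def sqOneRelQ8 (i j : σ) : MvPolynomial σ (ZMod 2) := X i ^ 2 * X j + X i * X j ^ 2

noncomputable def idealQ8 (i j : σ) : Ideal (MvPolynomial σ (ZMod 2)) :=
  Ideal.span {relQ8 i j, sqOneRelQ8 i j}

theorem relQ8_mem_idealQ8 (i j : σ) : relQ8 i j ∈ idealQ8 i j :=
  Ideal.subset_span (Set.mem_insert _ _)

theorem sqOneRelQ8_mem_idealQ8 (i j : σ) : sqOneRelQ8 i j ∈ idealQ8 i j :=
  Ideal.subset_span (Set.mem_insert_of_mem _ rfl)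

theorem isHomogeneous_relQ8 (i j : σ) : (relQ8 i j).IsHomogeneous 2 :=
  (((isHomogeneous_X _ i).pow 2).add ((isHomogeneous_X _ i).mul (isHomogeneous_X _ j))).add
    ((isHomogeneous_X _ j).pow 2)

theorem isHomogeneous_sqOneRelQ8 (i j : σ) : (sqOneRelQ8 i j).IsHomogeneous 3 :=
  (((isHomogeneous_X _ i).pow 2).mul (isHomogeneous_X _ j)).add
    ((isHomogeneous_X _ i).mul ((isHomogeneous_X _ j).pow 2))

theorem mk_relQ8 (i j : σ) :
    (Ideal.Quotient.mkₐ (ZMod 2) (idealQ8 i j) (X i)) ^ 2 +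
      Ideal.Quotient.mkₐ (ZMod 2) (idealQ8 i j) (X i) *
        Ideal.Quotient.mkₐ (ZMod 2) (idealQ8 i j) (X j) +
      (Ideal.Quotient.mkₐ (ZMod 2) (idealQ8 i j) (X j)) ^ 2 = 0 := by
  simp only [← map_pow, ← map_mul, ← map_add, Ideal.Quotient.mkₐ_eq_mk,
    Ideal.Quotient.eq_zero_iff_mem]
  exact relQ8_mem_idealQ8 i j

theorem mk_sqOneRelQ8 (i j : σ) :
    (Ideal.Quotient.mkₐ (ZMod 2) (idealQ8 i j) (X i)) ^ 2 *
        Ideal.Quotient.mkₐ (ZMod 2) (idealQ8 i j) (X j) +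
      Ideal.Quotient.mkₐ (ZMod 2) (idealQ8 i j) (X i) *
        (Ideal.Quotient.mkₐ (ZMod 2) (idealQ8 i j) (X j)) ^ 2 = 0 := by
  simp only [← map_pow, ← map_mul, ← map_add, Ideal.Quotient.mkₐ_eq_mk,
    Ideal.Quotient.eq_zero_iff_mem]
  exact sqOneRelQ8_mem_idealQ8 i j

theorem add_mul_mem_span_pow_three {i j : σ} {f : MvPolynomial σ (ZMod 2)}
    (hf : f ∈ idealQ8 i j) : (X i + X j) * f ∈ Ideal.span {X i ^ 3, X j ^ 3} := by
  obtain ⟨a, b, rfl⟩ := Ideal.mem_span_pair.1 hf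
  refine Ideal.mem_span_pair.2 ⟨a + b * X j, a + b * X i, ?_⟩
  unfold relQ8 sqOneRelQ8
  linear_combination -(a * (X i ^ 2 * X j + X i * X j ^ 2) + b * X i ^ 2 * X j ^ 2 :
    MvPolynomial σ (ZMod 2)) * two_eq_zero_of_zmod_two (MvPolynomial σ (ZMod 2))

theorem coeff_eq_zero_of_mem_span_pow_three {i j : σ} {m : σ →₀ ℕ} (hi : m i < 3)
    (hj : m j < 3) {f : MvPolynomial σ (ZMod 2)} (hf : f ∈ Ideal.span {X i ^ 3, X j ^ 3}) :
    coeff m f = 0 := by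
  obtain ⟨a, b, rfl⟩ := Ideal.mem_span_pair.1 hf
  rw [coeff_add, X_pow_eq_monomial, X_pow_eq_monomial, coeff_mul_monomial', coeff_mul_monomial',
    if_neg (by simpa [Finsupp.single_le_iff] using hi),
    if_neg (by simpa [Finsupp.single_le_iff] using hj), add_zero]

end IdealQ8

theorem sqOp_of_isHomogeneous {f : MvPolynomial (Fin 2) (ZMod 2)} {d : ℕ}
    (hf : f.IsHomogeneous d) (k : ℕ) :
    SqOp k f = homogeneousComponent (d + k) (totalSq f) := by
  rcases eq_or_ne f 0 with rfl | hf0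
  · simp [SqOp]
  rw [SqOp, Finset.sum_eq_single d, homogeneousComponent_of_mem hf, if_pos rfl]
  · intro e _ hed
    rw [homogeneousComponent_of_mem hf, if_neg hed, map_zero, map_zero]
  · simp [hf.totalDegree hf0]

section GradedAlgebra

attribute [local instance] MvPolynomial.gradedAlgebra

theorem isHomogeneous_idealQ8 {σ : Type*} (i j : σ) :
    (idealQ8 i j).IsHomogeneous (homogeneousSubmodule σ (ZMod 2)) := by
  refine Ideal.homogeneous_span _ _ ?_
  rintro p (rfl | rfl)
  exacts [⟨2, isHomogeneous_relQ8 i j⟩, ⟨3, isHomogeneous_sqOneRelQ8 i j⟩]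

theorem sqOp_mem_of_isHomogeneous {I : Ideal (MvPolynomial (Fin 2) (ZMod 2))}
    (hI : I.IsHomogeneous (homogeneousSubmodule (Fin 2) (ZMod 2)))
    (htotal : ∀ f ∈ I, totalSq f ∈ I) (k : ℕ) {f : MvPolynomial (Fin 2) (ZMod 2)} (hf : f ∈ I) :
    SqOp k f ∈ I :=
  Ideal.sum_mem _ fun d _ => homogeneousComponent_mem_of_mem hI
    (htotal _ (homogeneousComponent_mem_of_mem hI hf d)) _

end GradedAlgebra

theorem totalSq_relQ8 : totalSq (relQ8 0 1) = relQ8 0 1 + sqOneRelQ8 0 1 + relQ8 0 1 ^ 2 := by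
  simp only [totalSq, relQ8, sqOneRelQ8, map_add, map_mul, map_pow, aeval_X]
  linear_combination (X 0 ^ 3 + X 1 ^ 3 - X 0 ^ 3 * X 1 - X 0 ^ 2 * X 1 ^ 2 -
    X 0 * X 1 ^ 3 : MvPolynomial (Fin 2) (ZMod 2)) *
      two_eq_zero_of_zmod_two (MvPolynomial (Fin 2) (ZMod 2))

theorem totalSq_sqOneRelQ8 :
    totalSq (sqOneRelQ8 0 1) = sqOneRelQ8 0 1 * ((1 + X 0) * (1 + X 1) * (1 + X 0 + X 1)) := by
  simp only [totalSq, sqOneRelQ8, map_add, map_mul, map_pow, aeval_X]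
  linear_combination (-(X 0 ^ 2 * X 1 ^ 2 * (1 + X 0) * (1 + X 1)) :
    MvPolynomial (Fin 2) (ZMod 2)) * two_eq_zero_of_zmod_two (MvPolynomial (Fin 2) (ZMod 2))

theorem Rrel_eq_relQ8 : Rrel = relQ8 0 1 := rfl

theorem sqOp_one_Rrel : SqOp 1 Rrel = sqOneRelQ8 0 1 := by
  rw [Rrel_eq_relQ8, sqOp_of_isHomogeneous (isHomogeneous_relQ8 0 1), totalSq_relQ8, map_add,
    map_add, homogeneousComponent_of_mem (isHomogeneous_relQ8 0 1),
    homogeneousComponent_of_mem (isHomogeneous_sqOneRelQ8 0 1),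
    homogeneousComponent_of_mem ((isHomogeneous_relQ8 0 1).pow 2)]
  simp

theorem sqOneRelQ8_notMem_span_Rrel : sqOneRelQ8 (0 : Fin 2) 1 ∉ Ideal.span {Rrel} := by
  have hdeg : (Polynomial.X ^ 2 + Polynomial.X + 1 : Polynomial (ZMod 2)).degree = 2 := by
    compute_degree!
  have : Nontrivial (AdjoinRoot (Polynomial.X ^ 2 + Polynomial.X + 1 : Polynomial (ZMod 2))) :=
    AdjoinRoot.nontrivial _ (by rw [hdeg]; decide)
  obtain ⟨ω, hω⟩ : ∃ ω : AdjoinRoot (Polynomial.X ^ 2 + Polynomial.X + 1 : Polynomial (ZMod 2)),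
      ω ^ 2 + ω + 1 = 0 := by
    refine ⟨AdjoinRoot.root _, ?_⟩
    have := AdjoinRoot.eval₂_root (Polynomial.X ^ 2 + Polynomial.X + 1 : Polynomial (ZMod 2))
    rwa [Polynomial.eval₂_add, Polynomial.eval₂_add, Polynomial.eval₂_X_pow, Polynomial.eval₂_X,
      Polynomial.eval₂_one] at this
  intro h
  obtain ⟨a, ha⟩ := Ideal.mem_span_singleton'.1 h
  have hval := congrArg (aeval ![ω, 1]) ha
  simp only [Rrel, sqOneRelQ8, map_mul, map_add, map_pow, aeval_X, Matrix.cons_val_zero,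
    Matrix.cons_val_one, Matrix.cons_val_fin_one, mul_one, one_pow, hω, mul_zero] at hval
  exact one_ne_zero (by linear_combination hω + hval : (1 : AdjoinRoot _) = 0)

theorem totalSq_mem_idealQ8 {f : MvPolynomial (Fin 2) (ZMod 2)} (hf : f ∈ idealQ8 0 1) :
    totalSq f ∈ idealQ8 0 1 := by
  obtain ⟨a, b, rfl⟩ := Ideal.mem_span_pair.1 hf
  have hR := relQ8_mem_idealQ8 (0 : Fin 2) 1
  have hS := sqOneRelQ8_mem_idealQ8 (0 : Fin 2) 1
  rw [map_add, map_mul, map_mul, totalSq_relQ8, totalSq_sqOneRelQ8]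
  exact add_mem
    (Ideal.mul_mem_left _ _ (add_mem (add_mem hR hS) (Ideal.pow_mem_of_mem _ hR 2 two_pos)))
    (Ideal.mul_mem_left _ _ (Ideal.mul_mem_right _ _ hS))

theorem sqOp_mem_idealQ8 (k : ℕ) {f : MvPolynomial (Fin 2) (ZMod 2)} (hf : f ∈ idealQ8 0 1) :
    SqOp k f ∈ idealQ8 0 1 :=
  sqOp_mem_of_isHomogeneous (isHomogeneous_idealQ8 0 1) (fun _ => totalSq_mem_idealQ8) k hf

theorem map_weightedHomogeneousSubmodule_eq_span {R M σ N : Type*} [CommSemiring R]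
    [AddCommMonoid M] [AddCommMonoid N] [Module R N] (f : MvPolynomial σ R →ₗ[R] N)
    (w : σ → M) (n : M) :
    (weightedHomogeneousSubmodule R w n).map f =
      Submodule.span R ((fun d => f (monomial d 1)) '' {d | Finsupp.weight w d = n}) := by
  rw [weightedHomogeneousSubmodule_eq_finsupp_supported,
    AddMonoidAlgebra.supported_eq_span_single, Submodule.map_span, Set.image_image]
  rfl

theorem monomial_fin_three {R : Type*} [CommSemiring R] (d : Fin 3 →₀ ℕ) :
    (monomial d 1 : MvPolynomial (Fin 3) R) = X 0 ^ d 0 * X 1 ^ d 1 * X 2 ^ d 2 := by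
  rw [monomial_eq, C_1, one_mul, Finsupp.prod_fintype _ _ (by simp), Fin.prod_univ_three]

theorem weight_fin_three (w : Fin 3 → ℕ) (d : Fin 3 →₀ ℕ) :
    Finsupp.weight w d = d 0 * w 0 + d 1 * w 1 + d 2 * w 2 := by
  rw [Finsupp.weight_apply, Finsupp.sum_fintype _ _ (by simp), Fin.sum_univ_three]
  rfl

theorem finrank_span_pair_of_zmod_two {M : Type*} [AddCommGroup M] [Module (ZMod 2) M] {a b : M}
    (ha : a ≠ 0) (hb : b ≠ 0) (hab : a + b ≠ 0) :
    Module.finrank (ZMod 2) (Submodule.span (ZMod 2) {a, b}) = 2 := by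
  have hli : LinearIndependent (ZMod 2) ![a, b] := by
    refine (LinearIndependent.pair_iff' ha).2 fun c hc => ?_
    obtain rfl | rfl : c = 0 ∨ c = 1 := (by decide : ∀ c : ZMod 2, c = 0 ∨ c = 1) c
    · exact hb (by simpa using hc.symm)
    · refine hab ?_
      rw [← hc, one_smul, ← two_smul (ZMod 2), show (2 : ZMod 2) = 0 from rfl, zero_smul]
  rw [← Matrix.range_cons_cons_empty a b ![], finrank_span_eq_card hli, Fintype.card_fin]

theorem socle_notMem_idealQ8 (q : ℕ) :
    (X 0 * X 1 ^ 2 * X 2 ^ q : MvPolynomial (Fin 3) (ZMod 2)) ∉ idealQ8 0 1 := by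
  intro h
  have h0 := coeff_eq_zero_of_mem_span_pow_three
    (m := Finsupp.single 0 2 + Finsupp.single 1 2 + Finsupp.single 2 q)
    (by simp) (by simp) (add_mul_mem_span_pow_three h)
  have hmon : (X 0 ^ 2 * X 1 ^ 2 * X 2 ^ q : MvPolynomial (Fin 3) (ZMod 2)) =
      monomial (Finsupp.single 0 2 + Finsupp.single 1 2 + Finsupp.single 2 q) 1 := by
    rw [X_pow_eq_monomial, X_pow_eq_monomial, X_pow_eq_monomial, monomial_mul, monomial_mul,
      one_mul, one_mul]
  have hcube : (X 0 * X 1 ^ 3 * X 2 ^ q : MvPolynomial (Fin 3) (ZMod 2)) ∈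
      Ideal.span {X 0 ^ 3, X 1 ^ 3} :=
    Ideal.mul_mem_right _ _ (Ideal.mul_mem_left _ _ (Ideal.subset_span (by simp)))
  rw [show (X 0 + X 1) * (X 0 * X 1 ^ 2 * X 2 ^ q : MvPolynomial (Fin 3) (ZMod 2)) =
      X 0 ^ 2 * X 1 ^ 2 * X 2 ^ q + X 0 * X 1 ^ 3 * X 2 ^ q by ring,
    coeff_add, hmon, coeff_monomial, if_pos rfl,
    coeff_eq_zero_of_mem_span_pow_three (by simp) (by simp) hcube] at h0
  exact one_ne_zero h0

noncomputable def degreePartQ8 (n : ℕ) :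
    Submodule (ZMod 2) (MvPolynomial (Fin 3) (ZMod 2) ⧸ idealQ8 (0 : Fin 3) 1) :=
  (weightedHomogeneousSubmodule (ZMod 2) (![1, 1, 4] : Fin 3 → ℕ) n).map
    (Ideal.Quotient.mkₐ (ZMod 2) (idealQ8 (0 : Fin 3) 1)).toLinearMap

section DegreePartQ8

local notation "𝔲" => Ideal.Quotient.mkₐ (ZMod 2) (idealQ8 (0 : Fin 3) 1) (X 0)
local notation "𝔳" => Ideal.Quotient.mkₐ (ZMod 2) (idealQ8 (0 : Fin 3) 1) (X 1)
local notation "𝔱" => Ideal.Quotient.mkₐ (ZMod 2) (idealQ8 (0 : Fin 3) 1) (X 2)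

theorem ne_zero_of_mul_eq_socle {p : MvPolynomial (Fin 3) (ZMod 2) ⧸ idealQ8 (0 : Fin 3) 1}
    (c : MvPolynomial (Fin 3) (ZMod 2) ⧸ idealQ8 (0 : Fin 3) 1) (q : ℕ)
    (h : c * p = 𝔲 * 𝔳 ^ 2 * 𝔱 ^ q) : p ≠ 0 := by
  refine right_ne_zero_of_mul (a := c) (h ▸ ?_)
  simp only [← map_pow, ← map_mul, Ideal.Quotient.mkₐ_eq_mk, ne_eq,
    Ideal.Quotient.eq_zero_iff_mem]
  exact socle_notMem_idealQ8 q

theorem pow_mul_pow_mul_pow_mem_degreePartQ8 {a b c n : ℕ} (h : a + b + 4 * c = n) :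
    𝔲 ^ a * 𝔳 ^ b * 𝔱 ^ c ∈ degreePartQ8 n := by
  refine ⟨X 0 ^ a * X 1 ^ b * X 2 ^ c, ?_, by simp⟩
  have hX (i : Fin 3) := isWeightedHomogeneous_X (ZMod 2) (![1, 1, 4] : Fin 3 → ℕ) i
  rw [SetLike.mem_coe, mem_weightedHomogeneousSubmodule, ← h]
  convert ((hX 0).pow a).mul ((hX 1).pow b) |>.mul ((hX 2).pow c) using 1
  simp [mul_comm]

theorem degreePartQ8_eq_span {r q : ℕ} (hr : r < 4)
    {B : Set (MvPolynomial (Fin 3) (ZMod 2) ⧸ idealQ8 (0 : Fin 3) 1)}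
    (hB : ∀ a b, a + b = r → 𝔲 ^ a * 𝔳 ^ b * 𝔱 ^ q ∈ Submodule.span (ZMod 2) B)
    (hBV : ∀ p ∈ B, ∃ a b, a + b = r ∧ p = 𝔲 ^ a * 𝔳 ^ b * 𝔱 ^ q) :
    degreePartQ8 (r + 4 * q) = Submodule.span (ZMod 2) B := by
  refine le_antisymm ?_ (Submodule.span_le.2 fun p hp => ?_)
  · rw [degreePartQ8, map_weightedHomogeneousSubmodule_eq_span, Submodule.span_le]
    rintro _ ⟨d, hd, rfl⟩
    simp only [Set.mem_ofPred_eq, weight_fin_three] at hd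
    simp only [AlgHom.toLinearMap_apply, monomial_fin_three, map_mul, map_pow]
    by_cases h4 : 4 ≤ d 0 + d 1
    · rw [pow_mul_pow_eq_zero_of_relations (mk_relQ8 _ _) (mk_sqOneRelQ8 _ _) h4, zero_mul]
      exact zero_mem _
    obtain rfl : d 2 = q := by simp at hd; omega
    exact hB _ _ (by simp at hd; omega)
  · obtain ⟨a, b, hab, rfl⟩ := hBV p hp
    exact pow_mul_pow_mul_pow_mem_degreePartQ8 (by omega)

theorem finrank_degreePartQ8_four_mul (q : ℕ) :
    Module.finrank (ZMod 2) (degreePartQ8 (4 * q)) = 1 := by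
  rw [← zero_add (4 * q), degreePartQ8_eq_span (r := 0) (B := {𝔱 ^ q}) (by norm_num)
    (fun a b hab => ?_) (fun p hp => ⟨0, 0, rfl, by simpa using hp⟩),
    finrank_span_singleton (ne_zero_of_mul_eq_socle (𝔲 * 𝔳 ^ 2) q rfl)]
  obtain ⟨rfl, rfl⟩ : a = 0 ∧ b = 0 := by omega
  simp

theorem finrank_degreePartQ8_one_add_four_mul (q : ℕ) :
    Module.finrank (ZMod 2) (degreePartQ8 (1 + 4 * q)) = 2 := by
  have hv3 := cube_right_eq_zero_of_relations (mk_relQ8 (0 : Fin 3) 1) (mk_sqOneRelQ8 _ _)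
  rw [degreePartQ8_eq_span (B := {𝔲 * 𝔱 ^ q, 𝔳 * 𝔱 ^ q}) (by norm_num) (fun a b hab => ?_)
    (fun p hp => ?_), finrank_span_pair_of_zmod_two
      (ne_zero_of_mul_eq_socle (𝔳 ^ 2) q (by ring)) (ne_zero_of_mul_eq_socle (𝔲 * 𝔳) q (by ring))
      (ne_zero_of_mul_eq_socle (𝔳 ^ 2) q (by linear_combination 𝔱 ^ q * hv3))]
  · obtain ⟨rfl, rfl⟩ | ⟨rfl, rfl⟩ : (a = 1 ∧ b = 0) ∨ (a = 0 ∧ b = 1) := by omega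
    · exact Submodule.subset_span (by simp)
    · exact Submodule.subset_span (by simp)
  · obtain rfl | rfl := hp
    exacts [⟨1, 0, rfl, by simp⟩, ⟨0, 1, rfl, by simp⟩]

theorem finrank_degreePartQ8_two_add_four_mul (q : ℕ) :
    Module.finrank (ZMod 2) (degreePartQ8 (2 + 4 * q)) = 2 := by
  have hv3 := cube_right_eq_zero_of_relations (mk_relQ8 (0 : Fin 3) 1) (mk_sqOneRelQ8 _ _)
  rw [degreePartQ8_eq_span (B := {𝔲 * 𝔳 * 𝔱 ^ q, 𝔳 ^ 2 * 𝔱 ^ q}) (by norm_num)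
    (fun a b hab => ?_) (fun p hp => ?_), finrank_span_pair_of_zmod_two
      (ne_zero_of_mul_eq_socle 𝔳 q (by ring)) (ne_zero_of_mul_eq_socle 𝔲 q (by ring))
      (ne_zero_of_mul_eq_socle 𝔳 q (by linear_combination 𝔱 ^ q * hv3))]
  · obtain ⟨rfl, rfl⟩ | ⟨rfl, rfl⟩ | ⟨rfl, rfl⟩ :
        (a = 2 ∧ b = 0) ∨ (a = 1 ∧ b = 1) ∨ (a = 0 ∧ b = 2) := by omega
    · rw [pow_zero, mul_one, sq_eq_of_relation (mk_relQ8 _ _), add_mul]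
      exact add_mem (Submodule.subset_span (by simp)) (Submodule.subset_span (by simp))
    · exact Submodule.subset_span (by simp)
    · exact Submodule.subset_span (by simp)
  · obtain rfl | rfl := hp
    exacts [⟨1, 1, rfl, by simp⟩, ⟨0, 2, rfl, by simp⟩]

theorem finrank_degreePartQ8_three_add_four_mul (q : ℕ) :
    Module.finrank (ZMod 2) (degreePartQ8 (3 + 4 * q)) = 1 := by
  have hu3 := cube_left_eq_zero_of_relations (mk_relQ8 (0 : Fin 3) 1) (mk_sqOneRelQ8 _ _)
  have hv3 := cube_right_eq_zero_of_relations (mk_relQ8 (0 : Fin 3) 1) (mk_sqOneRelQ8 _ _)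
  rw [degreePartQ8_eq_span (B := {𝔲 * 𝔳 ^ 2 * 𝔱 ^ q}) (by norm_num) (fun a b hab => ?_)
    (fun p hp => ⟨1, 2, rfl, by simpa using hp⟩),
    finrank_span_singleton (ne_zero_of_mul_eq_socle 1 q (one_mul _))]
  obtain ⟨rfl, rfl⟩ | ⟨rfl, rfl⟩ | ⟨rfl, rfl⟩ | ⟨rfl, rfl⟩ :
      (a = 3 ∧ b = 0) ∨ (a = 2 ∧ b = 1) ∨ (a = 1 ∧ b = 2) ∨ (a = 0 ∧ b = 3) := by omega
  · rw [hu3, zero_mul, zero_mul]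
    exact zero_mem _
  · rw [pow_one, sq_mul_eq_of_relation (mk_sqOneRelQ8 _ _)]
    exact Submodule.mem_span_singleton_self _
  · rw [pow_one]
    exact Submodule.mem_span_singleton_self _
  · rw [hv3, mul_zero, zero_mul]
    exact zero_mem _

end DegreePartQ8

theorem finrank_degreePartQ8 (n : ℕ) :
    Module.finrank (ZMod 2) (degreePartQ8 n) = if n % 4 = 0 ∨ n % 4 = 3 then 1 else 2 := by
  obtain ⟨r, q, hr, rfl⟩ : ∃ r q, r < 4 ∧ n = r + 4 * q :=
    ⟨n % 4, n / 4, Nat.mod_lt n four_pos, (Nat.mod_add_div n 4).symm⟩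
  interval_cases r
  · rw [zero_add]
    simp [finrank_degreePartQ8_four_mul]
  · simp [finrank_degreePartQ8_one_add_four_mul]
  · simp [finrank_degreePartQ8_two_add_four_mul]
  · simp [finrank_degreePartQ8_three_add_four_mul]

/-- In `F₂[u, v]` with `R = u² + uv + v²`:
(i) `Sq¹R = u²v + uv²` and it does not lie in the ideal `(R)`, so `(R)` is not
Steenrod-stable; (ii) the ideal `(R, Sq¹R)` is stable under all Steenrod operations
`Sq^k`, and it is the smallest Steenrod-stable ideal containing `R`;
(iii) the quotient `F₂[u, v, t]/(R, Sq¹R)` with `|u| = |v| = 1`, `|t| = 4` has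
Poincaré series `(1 + 2s + 2s² + s³)/(1 − s⁴)`, i.e. its weighted-degree-`n` part has
dimension `1` when `n ≡ 0, 3 (mod 4)` and `2` otherwise. -/
theorem steenrod_closure_of_quaternion_relation :
    SqOp 1 Rrel = X 0 ^ 2 * X 1 + X 0 * X 1 ^ 2 ∧
    SqOp 1 Rrel ∉ Ideal.span {Rrel} ∧
    (∀ k : ℕ, ∀ f ∈ Ideal.span {Rrel, SqOp 1 Rrel},
      SqOp k f ∈ Ideal.span {Rrel, SqOp 1 Rrel}) ∧
    (∀ J : Ideal (MvPolynomial (Fin 2) (ZMod 2)), Rrel ∈ J →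
      (∀ k : ℕ, ∀ f ∈ J, SqOp k f ∈ J) → Ideal.span {Rrel, SqOp 1 Rrel} ≤ J) ∧
    (∀ n : ℕ,
      Module.finrank (ZMod 2)
        (Submodule.map
          (Ideal.Quotient.mkₐ (ZMod 2)
            (Ideal.span {(X 0 ^ 2 + X 0 * X 1 + X 1 ^ 2 :
                MvPolynomial (Fin 3) (ZMod 2)),
              X 0 ^ 2 * X 1 + X 0 * X 1 ^ 2})).toLinearMap
          (weightedHomogeneousSubmodule (ZMod 2) (![1, 1, 4] : Fin 3 → ℕ) n)) =
        if n % 4 = 0 ∨ n % 4 = 3 then 1 else 2) := by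
  have hspan : Ideal.span {Rrel, SqOp 1 Rrel} = idealQ8 0 1 := by
    rw [sqOp_one_Rrel, Rrel_eq_relQ8]; rfl
  refine ⟨sqOp_one_Rrel, sqOp_one_Rrel ▸ sqOneRelQ8_notMem_span_Rrel,
    hspan ▸ fun k _ => sqOp_mem_idealQ8 k, fun J hR hJ => ?_, finrank_degreePartQ8⟩
  rw [Ideal.span_le, Set.insert_subset_iff, Set.singleton_subset_iff]
  exact ⟨hR, hJ 1 Rrel hR⟩
end

section
/- Let P : k[X₁,…,Xₙ] → R be a surjective algebra map and suppose X₁, …, X_m do not occur in some generating set of ker P. Then, writing xᵢ = P(Xᵢ) and S = R/(x₁, …, x_m), there is an algebra isomorphism R ≅ S[x₁, …, x_m], i.e. R is a polynomial ring over S in the images of the polynomial variables. -/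
/-!
Write `k[X₁, …, Xₙ] = A[X₁, …, X_m]` with `A = k[X_{m+1}, …, Xₙ]`. Since the kernel of `P` is
generated by elements of `A`, it is the extension `J·A[X]` of an ideal `J` of `A`, so
`R ≅ A[X] ⧸ J·A[X] ≅ (A ⧸ J)[X]` with `xᵢ ↦ Xᵢ`. Killing the variables of a polynomial ring leaves
its coefficient ring, hence `R ⧸ (x₁, …, x_m) ≅ A ⧸ J` and `R ≅ (R ⧸ (x₁, …, x_m))[X]`.
-/

open MvPolynomial

namespace MvPolynomial

section idealOfVars

variable {ι B : Type*} [CommSemiring B]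

theorem ker_constantCoeff :
    RingHom.ker (constantCoeff : MvPolynomial ι B →+* B) = idealOfVars ι B := by
  ext p
  rw [RingHom.mem_ker, ← pow_one (idealOfVars ι B), mem_pow_idealOfVars_iff', constantCoeff_eq]
  refine ⟨fun h x hx => ?_, fun h => h 0 (by simp)⟩
  rw [Nat.lt_one_iff, Finsupp.degree_eq_zero_iff] at hx
  rwa [hx]

theorem ker_aeval_zero :
    RingHom.ker (aeval (fun _ => 0) : MvPolynomial ι B →ₐ[B] B) = idealOfVars ι B := by
  rw [← ker_constantCoeff]
  ext p
  simp

end idealOfVars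

section quotientIdealOfVars

variable {ι B : Type*} [CommRing B]

noncomputable def quotientIdealOfVarsAlgEquiv : (MvPolynomial ι B ⧸ idealOfVars ι B) ≃ₐ[B] B :=
  (Ideal.quotientEquivAlgOfEq B ker_aeval_zero.symm).trans
    (Ideal.quotientKerAlgEquivOfSurjective fun b => ⟨C b, aeval_C _ b⟩)

variable {k R : Type*} [CommRing k] [CommRing R] [Algebra k R] [Algebra k B]

noncomputable def _root_.AlgEquiv.mvPolynomialQuotientSpan (e : R ≃ₐ[k] MvPolynomial ι B)
    (x : ι → R) (hx : ∀ i, e (x i) = X i) :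
    R ≃ₐ[k] MvPolynomial ι (R ⧸ Ideal.span (Set.range x)) :=
  have hspan : idealOfVars ι B = (Ideal.span (Set.range x)).map (e : R →+* MvPolynomial ι B) := by
    rw [idealOfVars, Ideal.map_span, ← Set.range_comp]
    exact congrArg (Ideal.span ∘ Set.range) (_root_.funext hx).symm
  e.trans (mapAlgEquiv ι ((Ideal.quotientEquivAlg _ _ e hspan).trans
    (quotientIdealOfVarsAlgEquiv.restrictScalars k)).symm)

end quotientIdealOfVars

section split

variable (k : Type*) [CommRing k] {ι κ σ : Type*}

noncomputable def splitAlgEquiv (e : ι ⊕ κ ≃ σ) :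
    MvPolynomial σ k ≃ₐ[k] MvPolynomial ι (MvPolynomial κ k) :=
  (renameEquiv k e.symm).trans (sumAlgEquiv k ι κ)

variable {k}

@[simp]
theorem splitAlgEquiv_X_inl (e : ι ⊕ κ ≃ σ) (i : ι) :
    splitAlgEquiv k e (X (e (.inl i))) = X i := by
  simp [splitAlgEquiv]

theorem splitAlgEquiv_comp_rename_inr (e : ι ⊕ κ ≃ σ) :
    (splitAlgEquiv k e).toAlgHom.comp (rename (e ∘ .inr)) =
      IsScalarTower.toAlgHom k (MvPolynomial κ k) (MvPolynomial ι (MvPolynomial κ k)) := by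
  ext; simp [splitAlgEquiv]

theorem map_splitAlgEquiv_map_rename_inr (e : ι ⊕ κ ≃ σ) (J : Ideal (MvPolynomial κ k)) :
    (J.map (rename (e ∘ .inr))).map (splitAlgEquiv k e) = J.map C := by
  have h := Ideal.map_mapₐ (I := J) (rename (e ∘ .inr)) (splitAlgEquiv k e).toAlgHom
  rw [splitAlgEquiv_comp_rename_inr] at h
  exact h

variable {R : Type*} [CommRing R] [Algebra k R]

/-- `R ≅ k[κ][ι] ⧸ J·k[κ][ι] ≅ (k[κ] ⧸ J)[ι]`. -/
noncomputable def algEquivOfKerEqMap {P : MvPolynomial σ k →ₐ[k] R} (hP : Function.Surjective P)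
    (e : ι ⊕ κ ≃ σ) {J : Ideal (MvPolynomial κ k)}
    (hJ : RingHom.ker P = J.map (rename (e ∘ .inr))) :
    R ≃ₐ[k] MvPolynomial ι (MvPolynomial κ k ⧸ J) :=
  (Ideal.quotientKerAlgEquivOfSurjective hP).symm.trans <|
    (Ideal.quotientEquivAlg _ (J.map C) (splitAlgEquiv k e)
      (by rw [hJ]; exact (map_splitAlgEquiv_map_rename_inr e J).symm)).trans
    ((quotientEquivQuotientMvPolynomial (σ := ι) J).restrictScalars k).symm

theorem algEquivOfKerEqMap_X_inl {P : MvPolynomial σ k →ₐ[k] R} (hP : Function.Surjective P)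
    (e : ι ⊕ κ ≃ σ) {J : Ideal (MvPolynomial κ k)}
    (hJ : RingHom.ker P = J.map (rename (e ∘ .inr))) (i : ι) :
    algEquivOfKerEqMap hP e hJ (P (X (e (.inl i)))) = X i := by
  simp only [algEquivOfKerEqMap, AlgEquiv.trans_apply,
    Ideal.quotientKerAlgEquivOfSurjective_symm_apply, Ideal.quotientEquivAlg_mk,
    splitAlgEquiv_X_inl, AlgEquiv.symm_restrictScalars,
    AlgEquiv.coe_restrictScalars, AlgEquiv.symm_apply_eq]
  exact (eval₂_X _ (fun i => Ideal.Quotient.mk (J.map C) (X i)) i).symm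

end split

end MvPolynomial

def finSumAtLeastEquiv {m n : ℕ} (hmn : m ≤ n) : Fin m ⊕ {i : Fin n | m ≤ (i : ℕ)} ≃ Fin n :=
  ((Fin.castLEquiv hmn).sumCongr (Equiv.subtypeEquivRight fun _ => not_lt.symm)).trans
    (Equiv.sumCompl _)

/-- Let `P : k[X₀, …, X_{n-1}] → R` be a surjective presentation of a commutative
`k`-algebra whose kernel is generated by polynomials in which the first `m`
variables `X₀, …, X_{m-1}` do not occur.  Writing `xᵢ = P(Xᵢ)` and
`S = R/(x₀, …, x_{m-1})`, the ring `R` is a polynomial ring over `S` in `m`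
variables: `R ≅ S[x₀, …, x_{m-1}]`. -/
theorem polynomial_variables_split (k R : Type*) [Field k] [CommRing R] [Algebra k R]
    (n m : ℕ) (hmn : m ≤ n)
    (P : MvPolynomial (Fin n) k →ₐ[k] R) (hsurj : Function.Surjective P)
    (S : Set (MvPolynomial (Fin n) k)) (hker : RingHom.ker P.toRingHom = Ideal.span S)
    (hvars : ∀ p ∈ S, p ∈ MvPolynomial.supported k {i : Fin n | m ≤ (i : ℕ)}) :
    Nonempty (R ≃ₐ[k] MvPolynomial (Fin m)
      (R ⧸ Ideal.span (Set.range fun i : Fin m => P (X (Fin.castLE hmn i))))) := by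
  let e := finSumAtLeastEquiv hmn
  have hS : S ⊆ Set.range (rename (e ∘ .inr) (R := k)) := fun p hp =>
    (supported_eq_range_rename {i : Fin n | m ≤ (i : ℕ)}).le (hvars p hp)
  have hJ : RingHom.ker P = (Ideal.span (rename (e ∘ .inr) ⁻¹' S)).map (rename (e ∘ .inr)) := by
    rw [Ideal.map_span, Set.image_preimage_eq_of_subset hS]
    exact hker
  exact ⟨(algEquivOfKerEqMap hsurj e hJ).mvPolynomialQuotientSpan _
    (algEquivOfKerEqMap_X_inl hsurj e hJ)⟩
end
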